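/- Let G be a finite group acting on a set X, and let R ⊆ G be a set of representatives of the conjugacy classes of G. Then the map from the disjoint union ⨆_{g ∈ R} (Z_G(g) orbits of X^g) to the G-orbit space of S = {(g,x) | g•x = x} — sending the Z_G(g)-orbit of x ∈ X^g to the G-orbit of (g, x) — is a well-defined bijection, where G acts on S by h·(g,x) = (hgh⁻¹, h•x). -/
import Mathlib


/-- The relation on the fixed set `X^g` whose classes are the orbits of the
centralizer `Z_G(g)`. -/
def centralizerFixRel (G X : Type*) [Group G] [MulAction G X] (g : G)
    (x y : {x : X // g • x = x}) : Prop :=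
  ∃ h : G, h * g = g * h ∧ h • (x : X) = (y : X)

/-- The relation on the loop set `S = {(g,x) | g • x = x}` whose classes are the
orbits of the `G`-action `h · (g,x) = (h g h⁻¹, h • x)`. -/
def loopOrbitRel (G X : Type*) [Group G] [MulAction G X]
    (p q : {p : G × X // p.1 • p.2 = p.2}) : Prop :=
  ∃ h : G, (h * (p : G × X).1 * h⁻¹, h • (p : G × X).2) = (q : G × X)

theorem loopOrbitRel_equivalence (G X : Type*) [Group G] [MulAction G X] :
    Equivalence (loopOrbitRel G X) := by
  constructor
  · intro p
    exact ⟨1, by simp⟩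
  · rintro ⟨⟨g, x⟩, hp⟩ ⟨⟨g', x'⟩, hq⟩ ⟨h, he⟩
    simp only [Prod.mk.injEq] at he
    obtain ⟨h1, h2⟩ := he
    refine ⟨h⁻¹, ?_⟩
    simp only [Prod.mk.injEq]
    constructor
    · rw [← h1]; group
    · rw [← h2, inv_smul_smul]
  · rintro ⟨⟨g, x⟩, hp⟩ ⟨⟨g', x'⟩, hq⟩ ⟨⟨g'', x''⟩, hr⟩ ⟨h, he⟩ ⟨h', he'⟩
    simp only [Prod.mk.injEq] at he he'
    refine ⟨h' * h, ?_⟩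
    simp only [Prod.mk.injEq]
    constructor
    · rw [← he'.1, ← he.1]; group
    · rw [← he'.2, ← he.2, mul_smul]

/-- For a finite group `G` acting on `X` and a set `R` of representatives
of the conjugacy classes of `G`, the map sending the `Z_G(g)`-orbit of `x ∈ X^g`
(for `g ∈ R`) to the `G`-orbit of the loop `(g, x)` is a well-defined bijection
`⨆_{g ∈ R} Z_G(g)\Xᵍ ≃ G\S`. -/
theorem inertia_decomposition (G X : Type*) [Group G] [Finite G] [MulAction G X]
    (R : Set G) (hR : ∀ g : G, ∃! r, r ∈ R ∧ IsConj r g) :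
    ∃ e : (Σ g : R, Quot (centralizerFixRel G X (g : G))) ≃
        Quot (loopOrbitRel G X),
      ∀ (g : R) (x : {x : X // (g : G) • x = x}),
        e ⟨g, Quot.mk _ x⟩ = Quot.mk _ ⟨((g : G), (x : X)), x.2⟩ := by
  classical
  have heqv := loopOrbitRel_equivalence G X
  set F : (Σ g : R, Quot (centralizerFixRel G X (g : G))) → Quot (loopOrbitRel G X) :=
    fun p => Quot.lift (fun x : {x : X // (p.1 : G) • x = x} =>
        Quot.mk (loopOrbitRel G X) ⟨((p.1 : G), (x : X)), x.2⟩)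
      (by
        rintro x y ⟨h, hc, hxy⟩
        apply Quot.sound
        refine ⟨h, ?_⟩
        simp only [Prod.mk.injEq]
        constructor
        · rw [hc]; group
        · exact hxy) p.2 with hF
  have hbij : Function.Bijective F := by
    constructor
    · rintro ⟨⟨r, hr⟩, px⟩ ⟨⟨r', hr'⟩, py⟩ hFe
      induction px using Quot.ind with | _ x => ?_
      induction py using Quot.ind with | _ y => ?_
      have hrel : loopOrbitRel G X ⟨(r, (x : X)), x.2⟩ ⟨(r', (y : X)), y.2⟩ :=
        heqv.eqvGen_iff.mp (Quot.eq.mp hFe)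
      obtain ⟨h, he⟩ := hrel
      simp only [Prod.mk.injEq] at he
      obtain ⟨h1, h2⟩ := he
      have hconj : IsConj r r' := isConj_iff.mpr ⟨h, h1⟩
      obtain ⟨s, -, hu⟩ := hR r'
      have e1 : r = s := hu r ⟨hr, hconj⟩
      have e2 : r' = s := hu r' ⟨hr', IsConj.refl r'⟩
      obtain rfl : r = r' := e1.trans e2.symm
      have hcomm : h * r = r * h := by
        have : h * r * h⁻¹ * h = r * h := by rw [h1]
        simpa [mul_assoc] using this
      have hq : Quot.mk (centralizerFixRel G X r) x = Quot.mk _ y :=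
        Quot.sound ⟨h, hcomm, h2⟩
      simp [hq]
    · intro q
      induction q using Quot.ind with | _ p => ?_
      obtain ⟨⟨g, x⟩, hgx⟩ := p
      obtain ⟨r, ⟨hrR, hconj⟩, -⟩ := hR g
      obtain ⟨c, hc⟩ := isConj_iff.mp hconj
      have hy : r • (c⁻¹ • x) = c⁻¹ • x := by
        rw [smul_smul, show r * c⁻¹ = c⁻¹ * g from by rw [← hc]; group,
          ← smul_smul, hgx]
      refine ⟨⟨⟨r, hrR⟩, Quot.mk _ ⟨c⁻¹ • x, hy⟩⟩, ?_⟩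
      apply Quot.sound
      refine ⟨c, ?_⟩
      simp only [Prod.mk.injEq]
      exact ⟨hc, smul_inv_smul c x⟩
  exact ⟨Equiv.ofBijective F hbij, fun g x => rfl⟩
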